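/- In ℂ[x,y,z,t], the intersection of the ideal generated by x² and z²+t³+x with the subring ℂ[x,z,t] inside the quotient ring ℂ[x,y,z,t]/(x²y+z²+x+t³) equals the ideal of ℂ[x,z,t] generated by x² and z²+t³+x. Equivalently: if f ∈ ℂ[x,z,t] and f lies in the ideal x²·ℂ[X] of the coordinate ring ℂ[X] = ℂ[x,y,z,t]/(x²y+z²+x+t³), then f ∈ (x², z²+t³+x) ⊆ ℂ[x,z,t]. -/

import Mathlib

open MvPolynomial

/-- P = x²y + z² + x + t³ -/
noncomputable def KRP : MvPolynomial (Fin 4) ℂ :=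
  X 0 ^ 2 * X 1 + X 2 ^ 2 + X 0 + X 3 ^ 3

/-- A polynomial in ℂ[x,y,z,t] "lies in ℂ[x,z,t]" iff the variable y (index 1)
does not occur in it. -/
def NoY (f : MvPolynomial (Fin 4) ℂ) : Prop := ∀ m ∈ f.support, m 1 = 0

/-!
Setting `y = 0` is a ring endomorphism of `ℂ[x,y,z,t]` that fixes every polynomial free of `y`,
kills `y`, and sends `P = x²y + z² + x + t³` to `z² + t³ + x`. Lifting `f ∈ x²·ℂ[X]` to an identity
`f = a x² + b P` in `ℂ[x,y,z,t]` and setting `y = 0` gives the required decomposition.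
-/

namespace MvPolynomial

variable {R σ : Type*} [CommSemiring R] [DecidableEq σ]

noncomputable def killVar (i : σ) : MvPolynomial σ R →ₐ[R] MvPolynomial σ R :=
  aeval (Function.update X i 0)

@[simp]
theorem killVar_X_self (i : σ) : killVar i (X i : MvPolynomial σ R) = 0 := by
  simp [killVar]

@[simp]
theorem killVar_X_of_ne {i j : σ} (h : j ≠ i) : killVar i (X j : MvPolynomial σ R) = X j := by
  simp [killVar, h]

theorem killVar_eq_self_of_notMem_vars {i : σ} {p : MvPolynomial σ R} (h : i ∉ p.vars) :
    killVar i p = p :=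
  hom_congr_vars (f₂ := RingHom.id _) (by ext; simp [killVar])
    (fun j hj _ => killVar_X_of_ne (ne_of_mem_of_not_mem hj h)) rfl

theorem notMem_vars_killVar (i : σ) (p : MvPolynomial σ R) : i ∉ (killVar i p).vars := by
  rcases subsingleton_or_nontrivial R with _ | _
  · simp [Subsingleton.elim (killVar i p) 0, vars_0]
  intro hi
  rw [killVar, aeval_eq_bind₁] at hi
  obtain ⟨j, -, hij⟩ := mem_vars_bind₁ _ p hi
  by_cases hj : j = i
  · simp [hj, vars_0] at hij
  · simp [hj, vars_X] at hij
    exact hj hij.symm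

end MvPolynomial

theorem noY_iff_one_notMem_vars (f : MvPolynomial (Fin 4) ℂ) : NoY f ↔ 1 ∉ f.vars := by
  simp [NoY, mem_vars_iff_mem_support]

theorem killVar_one_KRP : killVar 1 KRP = X 2 ^ 2 + X 3 ^ 3 + X 0 := by
  simp only [KRP, map_add, map_mul, map_pow, ne_eq, Fin.reduceEq, not_false_eq_true,
    killVar_X_of_ne, killVar_X_self, mul_zero, zero_add]
  ring

/-- If f ∈ ℂ[x,z,t] and the image of f in ℂ[X] = ℂ[x,y,z,t]/(P) lies in the ideal
generated by x², then f lies in the ideal (x², z²+t³+x) of ℂ[x,z,t]. -/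
theorem stmt7 (f : MvPolynomial (Fin 4) ℂ) (hf : NoY f)
    (h : Ideal.Quotient.mk (Ideal.span {KRP}) f ∈
      Ideal.span {Ideal.Quotient.mk (Ideal.span {KRP}) (X 0 ^ 2)}) :
    ∃ a b : MvPolynomial (Fin 4) ℂ, NoY a ∧ NoY b ∧
      f = a * X 0 ^ 2 + b * (X 2 ^ 2 + X 3 ^ 3 + X 0) := by
  rw [← Set.image_singleton, ← Ideal.map_span, Ideal.mem_quotient_iff_mem_sup,
    Ideal.mem_span_singleton_sup] at h
  obtain ⟨a, _, hb, rfl⟩ := h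
  obtain ⟨b, rfl⟩ := Ideal.mem_span_singleton'.mp hb
  simp only [noY_iff_one_notMem_vars] at hf ⊢
  refine ⟨killVar 1 a, killVar 1 b, notMem_vars_killVar 1 a, notMem_vars_killVar 1 b, ?_⟩
  rw [← killVar_eq_self_of_notMem_vars hf, ← killVar_one_KRP]
  simp
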